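/- Let I(x) = (1/2)⟨x, Γ²AΓ²x⟩ - Σ_{i=1}^k γ_i² L*(x_i) on [-1,1]^k, where Γ = diag(γ₁,...,γ_k), γ_i ∈ (0,1), and A is symmetric. Then I attains no global maximum on the boundary of [-1,1]^k. -/

import Mathlib

/-!
Let `x` be a boundary point of the cube, with `x i = ±1`, and push the `i`-th coordinate
inward by `ε`. The quadratic part changes by `O(ε)`, while the entropy term gains
`γᵢ² (log 2 - L*(1 - ε)) ≥ -(γᵢ²/2) ε log ε`, which beats any linear function of `ε`
near `0` because `L*` has infinite slope at `±1`. So `I` strictly increases and `x` is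
not a maximiser.
-/

noncomputable def artanh (x : ℝ) : ℝ := (1/2) * Real.log ((1+x)/(1-x))

noncomputable def Lstar (x : ℝ) : ℝ :=
  (1/2)*(1+x)*Real.log (1+x) + (1/2)*(1-x)*Real.log (1-x)

noncomputable def opNorm2 {k : ℕ} (M : Matrix (Fin k) (Fin k) ℝ) : ℝ :=
  ‖Matrix.toEuclideanCLM (𝕜 := ℝ) M‖

open Matrix Real

theorem Matrix.IsSymm.mul_mul_of_isSymm {n R : Type*} [Fintype n] [CommSemiring R]
    {A B : Matrix n n R} (hA : A.IsSymm) (hB : B.IsSymm) : (B * A * B).IsSymm := by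
  rw [IsSymm, transpose_mul, transpose_mul, hA.eq, hB.eq, Matrix.mul_assoc]

theorem Matrix.IsSymm.add_single_dotProduct_mulVec_add_single {n R : Type*} [Fintype n]
    [DecidableEq n] [CommRing R] {M : Matrix n n R} (hM : M.IsSymm) (x : n → R) (i : n)
    (t : R) :
    (x + Pi.single i t) ⬝ᵥ M *ᵥ (x + Pi.single i t)
      = x ⬝ᵥ M *ᵥ x + 2 * t * (M *ᵥ x) i + t ^ 2 * M i i := by
  have hcross : x ⬝ᵥ M *ᵥ Pi.single i t = t * (M *ᵥ x) i := by
    rw [dotProduct_mulVec, ← mulVec_transpose, hM.eq, dotProduct_comm, single_dotProduct]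
  rw [mulVec_add, dotProduct_add, add_dotProduct, add_dotProduct, hcross, single_dotProduct,
    single_dotProduct, mulVec_single]
  simp only [Pi.smul_apply, op_smul_eq_mul, col_apply]
  ring

theorem Finset.sum_apply_add_single {ι M : Type*} [Fintype ι] [DecidableEq ι] [AddCommGroup M]
    (f : ι → ℝ → M) (x : ι → ℝ) (i : ι) (t : ℝ) :
    ∑ j, f j ((x + Pi.single i t : ι → ℝ) j) = ∑ j, f j (x j) + (f i (x i + t) - f i (x i)) := by
  rw [← sub_eq_iff_eq_add', ← Finset.sum_sub_distrib,
    Finset.sum_eq_single_of_mem i (Finset.mem_univ i)]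
  · simp
  · intro j _ hj
    simp [hj]

theorem Lstar_neg (u : ℝ) : Lstar (-u) = Lstar u := by
  unfold Lstar
  rw [sub_neg_eq_add, ← sub_eq_add_neg]
  ring

theorem Lstar_mul_of_eq_neg_one_or_eq_one {c : ℝ} (hc : c = -1 ∨ c = 1) (u : ℝ) :
    Lstar (c * u) = Lstar u := by
  rcases hc with rfl | rfl
  · rw [neg_one_mul, Lstar_neg]
  · rw [one_mul]

theorem Lstar_one : Lstar 1 = log 2 := by
  norm_num [Lstar]

theorem neg_mul_log_le_two_mul_log_two_sub_Lstar_one_sub {ε : ℝ} (h0 : 0 < ε) (h1 : ε ≤ 1) :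
    -(ε * log ε) ≤ 2 * (log 2 - Lstar (1 - ε)) := by
  have hlog : (2 - ε) * log (2 - ε) ≤ 2 * log 2 :=
    mul_le_mul (by linarith) (log_le_log (by linarith) (by linarith))
      (log_nonneg (by linarith)) zero_le_two
  unfold Lstar
  rw [show (1 : ℝ) + (1 - ε) = 2 - ε by ring, sub_sub_cancel]
  linarith

theorem exists_mul_add_mul_sq_lt_log_two_sub_Lstar (a b : ℝ) {g : ℝ} (hg : 0 < g) :
    ∃ ε, 0 < ε ∧ ε < 1 ∧ a * ε + b * ε ^ 2 < g * (log 2 - Lstar (1 - ε)) := by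
  set C := |a| + |b|
  -- chosen so that `-(g/2) ε log ε = (C + g/2) ε`
  set ε := exp (-(2 * C / g + 1))
  have hε0 : 0 < ε := exp_pos _
  have hε1 : ε < 1 := by
    have : 0 ≤ 2 * C / g := by positivity
    exact exp_lt_one_iff.mpr (by linarith)
  refine ⟨ε, hε0, hε1, ?_⟩
  have hlinear : a * ε + b * ε ^ 2 ≤ C * ε := by
    have ha : a * ε ≤ |a| * ε := mul_le_mul_of_nonneg_right (le_abs_self a) hε0.le
    have hb : b * ε ^ 2 ≤ |b| * ε := calc
      b * ε ^ 2 ≤ |b| * ε ^ 2 := mul_le_mul_of_nonneg_right (le_abs_self b) (sq_nonneg ε)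
      _ ≤ |b| * ε := mul_le_mul_of_nonneg_left (by nlinarith) (abs_nonneg b)
    linarith
  have hgain : C * ε + g / 2 * ε = g / 2 * -(ε * log ε) := by
    rw [log_exp]
    field_simp
  calc a * ε + b * ε ^ 2 ≤ C * ε := hlinear
    _ < C * ε + g / 2 * ε := by linarith [mul_pos hg hε0]
    _ = g / 2 * -(ε * log ε) := hgain
    _ ≤ g / 2 * (2 * (log 2 - Lstar (1 - ε))) := mul_le_mul_of_nonneg_left
      (neg_mul_log_le_two_mul_log_two_sub_Lstar_one_sub hε0 hε1.le) (by positivity)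
    _ = g * (log 2 - Lstar (1 - ε)) := by ring

open Matrix in
theorem stmt13 (k : ℕ) (A : Matrix (Fin k) (Fin k) ℝ) (hA : A.IsSymm)
    (γ : Fin k → ℝ) (hγ : ∀ i, γ i ∈ Set.Ioo (0 : ℝ) 1)
    (Γ2 : Matrix (Fin k) (Fin k) ℝ) (hΓ2 : Γ2 = Matrix.diagonal (fun i => γ i ^ 2))
    (I : (Fin k → ℝ) → ℝ)
    (hI : I = fun x => (1 / 2) * (x ⬝ᵥ (Γ2 * A * Γ2).mulVec x)
      - ∑ i, γ i ^ 2 * Lstar (x i)) :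
    ∀ x : Fin k → ℝ, (∀ i, x i ∈ Set.Icc (-1 : ℝ) 1) →
      (∃ i, x i = -1 ∨ x i = 1) →
      ¬ (∀ y : Fin k → ℝ, (∀ i, y i ∈ Set.Icc (-1 : ℝ) 1) → I y ≤ I x) := by
  intro x hx ⟨i, hxi⟩ hmax
  set M := Γ2 * A * Γ2
  have hM : M.IsSymm := hA.mul_mul_of_isSymm (hΓ2 ▸ isSymm_diagonal _)
  obtain ⟨ε, hε0, hε1, hgain⟩ := exists_mul_add_mul_sq_lt_log_two_sub_Lstar
    (x i * (M *ᵥ x) i) (-(M i i / 2)) (pow_pos (hγ i).1 2)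
  set y := x + Pi.single i (-(x i * ε))
  have hyx : I y - I x = -(x i * (M *ᵥ x) i * ε) + M i i / 2 * ε ^ 2
      + γ i ^ 2 * (log 2 - Lstar (1 - ε)) := by
    have hxi_sq : x i ^ 2 = 1 := by rcases hxi with h | h <;> simp [h]
    have hLstar : Lstar (x i + -(x i * ε)) = Lstar (1 - ε) := by
      rw [show x i + -(x i * ε) = x i * (1 - ε) by ring,
        Lstar_mul_of_eq_neg_one_or_eq_one hxi]
    have hLstar_x : Lstar (x i) = log 2 := by
      rw [← mul_one (x i), Lstar_mul_of_eq_neg_one_or_eq_one hxi, Lstar_one]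
    have hsum := Finset.sum_apply_add_single (fun j u => γ j ^ 2 * Lstar u) x i (-(x i * ε))
    simp only [hLstar, hLstar_x] at hsum
    simp only [hI, y, hM.add_single_dotProduct_mulVec_add_single, hsum]
    linear_combination (M i i / 2 * ε ^ 2) * hxi_sq
  have hy : ∀ j, y j ∈ Set.Icc (-1 : ℝ) 1 := by
    intro j
    by_cases hj : j = i
    · subst hj
      rcases hxi with h | h <;> simp [y, h] <;> constructor <;> linarith
    · simpa [y, Pi.single_apply, hj] using hx j
  linarith [hmax y hy]
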